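/- Let Q_G be the unique N-point Gaussian quadrature rule for a positive linear functional L on C([a,b]) (exact on polynomials of degree ≤ 2N−1 with positive weights and points in (a,b)), and for each ℓ > 0 let Q_ℓ be an N-point quadrature rule with points in [a,b] and nonnegative weights such that |L[x^k] − Q_ℓ[x^k]| → 0 as ℓ → ∞ for every k = 0,…,2N−1, and the weights of Q_ℓ are uniformly bounded. Then the points and weights of Q_ℓ converge to those of Q_G as ℓ → ∞. -/
import Mathlib


open Finset Filter Topology

theorem stmt_16 (a b : ℝ) (hab : a < b) (N : ℕ) (hN : 0 < N)
    (Lmom : ℕ → ℝ)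
    (xG wG : Fin N → ℝ)
    (hxG_mono : StrictMono xG) (hxG_in : ∀ n, xG n ∈ Set.Ioo a b)
    (hwG_pos : ∀ n, 0 < wG n)
    (hG_exact : ∀ k ≤ 2 * N - 1, ∑ n, wG n * xG n ^ k = Lmom k)
    (hG_uniq : ∀ (y : Fin N → ℝ) (v : Fin N → ℝ), Monotone y →
      (∀ n, y n ∈ Set.Icc a b) → (∀ n, 0 ≤ v n) →
      (∀ k ≤ 2 * N - 1, ∑ n, v n * y n ^ k = Lmom k) → y = xG ∧ v = wG)
    (x w : ℝ → Fin N → ℝ)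
    (hx_in : ∀ ℓ n, x ℓ n ∈ Set.Icc a b) (hx_mono : ∀ ℓ, Monotone (x ℓ))
    (hw_nonneg : ∀ ℓ n, 0 ≤ w ℓ n)
    (W : ℝ) (hW : ∀ ℓ n, w ℓ n ≤ W)
    (hconv : ∀ k ≤ 2 * N - 1,
      Tendsto (fun ℓ => |Lmom k - ∑ n, w ℓ n * x ℓ n ^ k|) atTop (𝓝 0)) :
    Tendsto x atTop (𝓝 xG) ∧ Tendsto w atTop (𝓝 wG) := by
  -- the compact set of candidate quadrature rules
  set K : Set ((Fin N → ℝ) × (Fin N → ℝ)) :=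
    {p | (∀ n, p.1 n ∈ Set.Icc a b) ∧ Monotone p.1 ∧ ∀ n, p.2 n ∈ Set.Icc 0 W}
    with hKdef
  -- the moment-error function
  set F : (Fin N → ℝ) × (Fin N → ℝ) → ℝ :=
    fun p => ∑ k ∈ Finset.range (2 * N), |Lmom k - ∑ n, p.2 n * p.1 n ^ k|
    with hFdef
  have hFcont : Continuous F := by
    apply continuous_finset_sum
    intro k _
    exact (continuous_const.sub (continuous_finset_sum _ fun n _ =>
      ((continuous_apply n).comp continuous_snd).mul
        (((continuous_apply n).comp continuous_fst).pow k))).abs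
  -- K is compact
  have hKcompact : IsCompact K := by
    have h1 : K = ((Set.pi Set.univ fun _ : Fin N => Set.Icc a b) ∩ {X | Monotone X}) ×ˢ
        (Set.pi Set.univ fun _ : Fin N => Set.Icc 0 W) := by
      ext p
      constructor
      · rintro ⟨h1, h2, h3⟩
        exact ⟨⟨fun n _ => h1 n, h2⟩, fun n _ => h3 n⟩
      · rintro ⟨⟨h1, h2⟩, h3⟩
        exact ⟨fun n => h1 n (Set.mem_univ n), h2, fun n => h3 n (Set.mem_univ n)⟩
    rw [h1]
    have hmono : IsClosed {X : Fin N → ℝ | Monotone X} := by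
      have h2 : {X : Fin N → ℝ | Monotone X} =
          ⋂ (i : Fin N) (j : Fin N) (_ : i ≤ j), {X | X i ≤ X j} := by
        ext X
        simp [Monotone]
      rw [h2]
      exact isClosed_iInter fun i => isClosed_iInter fun j => isClosed_iInter fun _ =>
        isClosed_le (continuous_apply i) (continuous_apply j)
    exact (((isCompact_univ_pi fun _ => isCompact_Icc).inter_right hmono).prod
      (isCompact_univ_pi fun _ => isCompact_Icc))
  -- the sequence lies in K
  have hmemK : ∀ ℓ, (x ℓ, w ℓ) ∈ K := fun ℓ =>
    ⟨fun n => hx_in ℓ n, hx_mono ℓ, fun n => ⟨hw_nonneg ℓ n, hW ℓ n⟩⟩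
  -- F vanishes on K only at the Gaussian rule
  have huniq : ∀ p ∈ K, F p = 0 → p = (xG, wG) := by
    rintro ⟨y, v⟩ ⟨hy, hymono, hv⟩ hF0
    have hterm : ∀ k ∈ Finset.range (2 * N), |Lmom k - ∑ n, v n * y n ^ k| = 0 := by
      intro k hk
      have := (Finset.sum_eq_zero_iff_of_nonneg
        (fun k _ => abs_nonneg _)).mp hF0 k hk
      simpa using this
    have hmom : ∀ k ≤ 2 * N - 1, ∑ n, v n * y n ^ k = Lmom k := by
      intro k hk
      have hk' : k ∈ Finset.range (2 * N) := by
        simp only [Finset.mem_range]; omega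
      have := hterm k hk'
      have := abs_eq_zero.mp this
      linarith
    obtain ⟨h1, h2⟩ := hG_uniq y v hymono hy (fun n => (hv n).1) hmom
    simp [h1, h2]
  -- F along the sequence tends to 0
  have hFtend : Tendsto (fun ℓ => F (x ℓ, w ℓ)) atTop (𝓝 0) := by
    have : Tendsto (fun ℓ => ∑ k ∈ Finset.range (2 * N),
        |Lmom k - ∑ n, w ℓ n * x ℓ n ^ k|) atTop (𝓝 (∑ k ∈ Finset.range (2 * N), (0 : ℝ))) := by
      apply tendsto_finset_sum
      intro k hk
      exact hconv k (by simp only [Finset.mem_range] at hk; omega)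
    simpa using this
  -- main convergence via the compactness argument
  have hmain : Tendsto (fun ℓ => (x ℓ, w ℓ)) atTop (𝓝 (xG, wG)) := by
    rw [tendsto_nhds]
    intro U hUopen hUmem
    by_cases hne : (K \ U).Nonempty
    · obtain ⟨q₀, hq₀, hmin⟩ := (hKcompact.diff hUopen).exists_isMinOn hne
        hFcont.continuousOn
      have hε : 0 < F q₀ := by
        rcases lt_or_eq_of_le (by
          have : ∀ p, 0 ≤ F p := fun p => Finset.sum_nonneg fun k _ => abs_nonneg _
          exact this q₀) with h | h
        · exact h
        · exfalso
          exact hq₀.2 (huniq q₀ hq₀.1 h.symm ▸ hUmem)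
      have := hFtend.eventually (eventually_lt_nhds hε)
      filter_upwards [this] with ℓ hℓ
      by_contra hnot
      exact absurd (hmin ⟨hmemK ℓ, hnot⟩) (not_le.mpr hℓ)
    · rw [Set.not_nonempty_iff_eq_empty, Set.diff_eq_empty] at hne
      exact Eventually.of_forall fun ℓ => hne (hmemK ℓ)
  exact ⟨(continuous_fst.tendsto _).comp hmain, (continuous_snd.tendsto _).comp hmain⟩
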